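/- arXiv:2203.12862 — 2 statements merged into one kernel-verified Lean document; each statement's English description precedes it below -/
import Mathlib

section
/- Let e_r and f_r act on the ℚ(q)-span of {v_{a,b} : a,b ∈ ℤ≥0} by e_r v_{a,b} = -q^{2b+M+1}[L+a][a] v_{a-1,b} - [M+b][b] v_{a,b-1} and f_r v_{a,b} = q^{-L-2a-1} v_{a,b+1} + v_{a+1,b}, where L, M ≥ 0 are fixed integers and v_{a,b} = 0 if a < 0 or b < 0. Then for each i ≥ 0, the vector u_i = ∑_{j=0}^{i} (-1)^j ∏_{k=1}^{j} ( q^{-(M+2i-2k+1)} [M+i+1-k][i+1-k] / ([L+k][k]) ) v_{j,i-j} satisfies e_r u_i = 0. -/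
noncomputable section

/-- The indeterminate `q` in the field `ℚ(q)`. -/
def q : RatFunc ℚ := RatFunc.X

/-- The quantum integer `[k]` in `ℚ(q)`. -/
def qint (k : ℤ) : RatFunc ℚ := (q ^ k - q ^ (-k)) / (q - q⁻¹)

/-- The `ℚ(q)`-vector space with basis `{v_{a,b} : a, b ∈ ℤ≥0}`. -/
abbrev V2 := (ℕ × ℕ) →₀ RatFunc ℚ

/-- `e_r v_{a,b} = -q^{2b+M+1}[L+a][a] v_{a-1,b} - [M+b][b] v_{a,b-1}`, with `L = |l|`,
`M = |m|`; the convention `v_{-1,b} = v_{a,-1} = 0` is automatic since `[0] = 0`. -/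
def eOp (L M : ℕ) : V2 →ₗ[RatFunc ℚ] V2 :=
  Finsupp.lift V2 (RatFunc ℚ) (ℕ × ℕ) fun p =>
    (-(q ^ (2 * (p.2 : ℤ) + M + 1) * qint ((L : ℤ) + p.1) * qint p.1)) •
        Finsupp.single (p.1 - 1, p.2) (1 : RatFunc ℚ) +
      (-(qint ((M : ℤ) + p.2) * qint p.2)) • Finsupp.single (p.1, p.2 - 1) (1 : RatFunc ℚ)

/-- The highest weight vector candidate
`u_i = ∑_{j=0}^{i} (-1)^j ∏_{k=1}^{j} (q^{-(M+2i-2k+1)}[M+i+1-k][i+1-k]/([L+k][k])) v_{j,i-j}`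
(empty products equal `1`, so the coefficient of `v_{0,i}` is `1`). -/
def uVec (L M i : ℕ) : V2 :=
  ∑ j ∈ Finset.range (i + 1),
    ((-1 : RatFunc ℚ) ^ j *
        ∏ k ∈ Finset.Icc 1 j,
          (q ^ (-((M : ℤ) + 2 * i - 2 * k + 1)) * qint ((M : ℤ) + i + 1 - k) *
              qint ((i : ℤ) + 1 - k) / (qint ((L : ℤ) + k) * qint k))) •
      Finsupp.single (j, i - j) (1 : RatFunc ℚ)

/-! ### Auxiliary lemmas -/

lemma hq0 : q ≠ 0 := RatFunc.X_ne_zero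

lemma q_pow_ne_one (m : ℕ) (hm : m ≠ 0) : q ^ m ≠ 1 := by
  intro h
  have h2 : (Polynomial.X : Polynomial ℚ) ^ m = 1 := by
    apply RatFunc.algebraMap_injective ℚ
    rw [map_pow, map_one, RatFunc.algebraMap_X]
    exact h
  have := congrArg Polynomial.natDegree h2
  simp [Polynomial.natDegree_X_pow] at this
  exact hm this

lemma hden : q - q⁻¹ ≠ 0 := by
  intro h
  have hq2 : q ^ 2 = 1 := by
    have : q = q⁻¹ := by linear_combination h
    calc q ^ 2 = q * q := sq q
    _ = q * q⁻¹ := by rw [← this]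
    _ = 1 := mul_inv_cancel₀ hq0
  exact q_pow_ne_one 2 (by norm_num) hq2

lemma qint_natCast_ne_zero (n : ℕ) (h : n ≠ 0) : qint n ≠ 0 := by
  unfold qint
  apply div_ne_zero _ hden
  intro hnum
  have h1 : q ^ (n : ℤ) = q ^ (-(n : ℤ)) := by linear_combination hnum
  have h2 : q ^ (2 * n) = 1 := by
    have := congrArg (· * q ^ (n : ℤ)) h1
    simp only [← zpow_add₀ hq0] at this
    simpa [two_mul, ← zpow_natCast q, ← zpow_add₀ hq0] using this
  exact q_pow_ne_one (2 * n) (by omega) h2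

lemma qint_pos_ne_zero (n : ℤ) (h : 0 < n) : qint n ≠ 0 := by
  lift n to ℕ using h.le
  exact qint_natCast_ne_zero _ (by exact_mod_cast h.ne')

lemma qint_zero : qint 0 = 0 := by simp [qint]

lemma eOp_single (L M : ℕ) (p : ℕ × ℕ) :
    eOp L M (Finsupp.single p 1) =
      (-(q ^ (2 * (p.2 : ℤ) + M + 1) * qint ((L : ℤ) + p.1) * qint p.1)) •
        Finsupp.single (p.1 - 1, p.2) (1 : RatFunc ℚ) +
      (-(qint ((M : ℤ) + p.2) * qint p.2)) • Finsupp.single (p.1, p.2 - 1) (1 : RatFunc ℚ) := by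
  simp [eOp, Finsupp.lift_apply, Finsupp.sum_single_index]

/-- The coefficient of `v_{j,i-j}` in `u_i`. -/
def A (L M i j : ℕ) : RatFunc ℚ :=
  (-1 : RatFunc ℚ) ^ j *
    ∏ k ∈ Finset.Icc 1 j,
      (q ^ (-((M : ℤ) + 2 * i - 2 * k + 1)) * qint ((M : ℤ) + i + 1 - k) *
          qint ((i : ℤ) + 1 - k) / (qint ((L : ℤ) + k) * qint k))

lemma key (L M i t : ℕ) (ht : t < i) :
    A L M i (t + 1) * -(q ^ (2 * ((i - t - 1 : ℕ) : ℤ) + M + 1) * qint ((L:ℤ) + ((t + 1 : ℕ):ℤ)) * qint ((t+1:ℕ):ℤ)) +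
      A L M i t * -(qint ((M:ℤ) + ((i - t:ℕ):ℤ)) * qint ((i - t:ℕ):ℤ)) = 0 := by
  unfold A
  rw [Finset.prod_Icc_succ_top (Nat.le_add_left 1 t)]
  have c1 : ((i - t - 1 : ℕ) : ℤ) = (i:ℤ) - t - 1 := by omega
  have c2 : ((i - t : ℕ):ℤ) = (i:ℤ) - t := by omega
  rw [c1, c2]
  push_cast
  have ha : qint ((L:ℤ) + ((t:ℤ)+1)) ≠ 0 := qint_pos_ne_zero _ (by omega)
  have hb : qint ((t:ℤ)+1) ≠ 0 := qint_pos_ne_zero _ (by omega)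
  have epow : q ^ (2 * ((i:ℤ) - t - 1) + M + 1) = (q ^ (-((M:ℤ) + 2*i - 2*((t:ℤ)+1) + 1)))⁻¹ := by
    rw [← zpow_neg]; congr 1; ring
  have hX : q ^ (-((M:ℤ) + 2*i - 2*((t:ℤ)+1) + 1)) ≠ 0 := zpow_ne_zero _ hq0
  have e1 : (M:ℤ) + i + 1 - ((t:ℤ)+1) = (M:ℤ) + ((i:ℤ) - t) := by ring
  have e2 : (i:ℤ) + 1 - ((t:ℤ)+1) = (i:ℤ) - t := by ring
  rw [epow, e1, e2]
  set P := ∏ k ∈ Finset.Icc 1 t,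
      (q ^ (-((M : ℤ) + 2 * i - 2 * k + 1)) * qint ((M : ℤ) + i + 1 - k) *
          qint ((i : ℤ) + 1 - k) / (qint ((L : ℤ) + k) * qint k)) with hP
  set X := q ^ (-((M:ℤ) + 2*i - 2*((t:ℤ)+1) + 1)) with hXdef
  set a := qint ((L:ℤ) + ((t:ℤ)+1)) with hadef
  set b := qint ((t:ℤ)+1) with hbdef
  set N1 := qint ((M:ℤ) + ((i:ℤ) - t)) with hN1
  set N2 := qint ((i:ℤ) - t) with hN2
  field_simp
  ring

/-- For every `i ≥ 0`, `e_r u_i = 0`. -/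
theorem eOp_uVec_eq_zero (L M i : ℕ) : eOp L M (uVec L M i) = 0 := by
  have huv : uVec L M i = ∑ j ∈ Finset.range (i + 1),
      A L M i j • Finsupp.single (j, i - j) (1 : RatFunc ℚ) := rfl
  rw [huv, map_sum]
  simp only [map_smul, eOp_single]
  simp only [smul_add, Finset.sum_add_distrib, smul_smul]
  have hS1 : ∑ j ∈ Finset.range (i+1),
      (A L M i j * -(q ^ (2 * ((i - j : ℕ) : ℤ) + M + 1) * qint ((L : ℤ) + j) * qint (j : ℤ))) •
        Finsupp.single ((j - 1 : ℕ), i - j) (1 : RatFunc ℚ)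
      = ∑ t ∈ Finset.range i,
      (A L M i (t+1) * -(q ^ (2 * ((i - (t+1) : ℕ) : ℤ) + M + 1) * qint ((L : ℤ) + (t+1:ℕ)) * qint ((t+1:ℕ) : ℤ))) •
        Finsupp.single (t, i - (t+1)) (1 : RatFunc ℚ) := by
    rw [Finset.sum_range_succ']
    simp [qint_zero]
  have hS2 : ∑ j ∈ Finset.range (i+1),
      (A L M i j * -(qint ((M : ℤ) + (i - j : ℕ)) * qint ((i - j : ℕ) : ℤ))) •
        Finsupp.single (j, (i - j : ℕ) - 1) (1 : RatFunc ℚ)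
      = ∑ t ∈ Finset.range i,
      (A L M i t * -(qint ((M : ℤ) + (i - t : ℕ)) * qint ((i - t : ℕ) : ℤ))) •
        Finsupp.single (t, (i - t : ℕ) - 1) (1 : RatFunc ℚ) := by
    rw [Finset.sum_range_succ]
    simp [qint_zero]
  rw [hS1, hS2, ← Finset.sum_add_distrib]
  apply Finset.sum_eq_zero
  intro t ht
  rw [Finset.mem_range] at ht
  have hidx : (i - (t+1) : ℕ) = (i - t : ℕ) - 1 := by omega
  rw [hidx, ← add_smul]
  convert zero_smul (RatFunc ℚ) _
  exact key L M i t ht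

end
end

section
/- For every partition λ contained in the (M|N)-hook (i.e. λ_{M+1} ≤ N), the hook filling H_λ determined by a 01-sequence ε of length M+N with M zeros and N ones is well-defined: the inductive procedure of filling the next row of the remaining skew shape when ε_{k+1}=0 and the next column when ε_{k+1}=1 terminates with all boxes of λ filled. -/
/-- The cells of a finite set `S` of boxes lying in its first (topmost) nonempty row. -/
def firstRow (S : Finset (ℕ × ℕ)) : Finset (ℕ × ℕ) :=
  S.filter fun c => ∀ c' ∈ S, c.1 ≤ c'.1

/-- The cells of a finite set `S` of boxes lying in its first (leftmost) nonempty column. -/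
def firstCol (S : Finset (ℕ × ℕ)) : Finset (ℕ × ℕ) :=
  S.filter fun c => ∀ c' ∈ S, c.2 ≤ c'.2

/-- The region of `lam` filled after `k` steps of the inductive hook-filling procedure:
at step `k+1`, fill the first row of the remaining skew shape if `ε_{k+1} = 0` (`false`),
and its first column if `ε_{k+1} = 1` (`true`). -/
def fill (lam : Finset (ℕ × ℕ)) (eps : ℕ → Bool) : ℕ → Finset (ℕ × ℕ)
  | 0 => ∅
  | k + 1 =>
      fill lam eps k ∪
        (if eps k then firstCol (lam \ fill lam eps k) else firstRow (lam \ fill lam eps k))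

lemma step_row (lam : YoungDiagram) (r c : ℕ) :
    (lam.cells.filter fun p => p.1 < r ∨ p.2 < c) ∪
      firstRow (lam.cells \ lam.cells.filter fun p => p.1 < r ∨ p.2 < c) =
    lam.cells.filter fun p => p.1 < r + 1 ∨ p.2 < c := by
  have hsd : lam.cells \ (lam.cells.filter fun p => p.1 < r ∨ p.2 < c)
      = lam.cells.filter fun p => ¬(p.1 < r ∨ p.2 < c) := (Finset.filter_not _ _).symm
  rw [hsd]
  ext p
  simp only [firstRow, Finset.mem_union, Finset.mem_filter,
    YoungDiagram.mem_cells, not_or, not_lt]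
  constructor
  · rintro (⟨hp, h⟩ | ⟨⟨hp, hr, hc⟩, hmin⟩)
    · exact ⟨hp, by omega⟩
    · refine ⟨hp, Or.inl ?_⟩
      have hq : (r, p.2) ∈ lam := lam.up_left_mem hr le_rfl hp
      have := hmin (r, p.2) ⟨hq, le_rfl, hc⟩
      omega
  · rintro ⟨hp, h⟩
    by_cases h' : p.1 < r ∨ p.2 < c
    · exact Or.inl ⟨hp, h'⟩
    · push_neg at h'
      refine Or.inr ⟨⟨hp, h'.1, h'.2⟩, fun q hq => ?_⟩
      obtain ⟨_, hq1, _⟩ := hq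
      omega

lemma step_col (lam : YoungDiagram) (r c : ℕ) :
    (lam.cells.filter fun p => p.1 < r ∨ p.2 < c) ∪
      firstCol (lam.cells \ lam.cells.filter fun p => p.1 < r ∨ p.2 < c) =
    lam.cells.filter fun p => p.1 < r ∨ p.2 < c + 1 := by
  have hsd : lam.cells \ (lam.cells.filter fun p => p.1 < r ∨ p.2 < c)
      = lam.cells.filter fun p => ¬(p.1 < r ∨ p.2 < c) := (Finset.filter_not _ _).symm
  rw [hsd]
  ext p
  simp only [firstCol, Finset.mem_union, Finset.mem_filter,
    YoungDiagram.mem_cells, not_or, not_lt]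
  constructor
  · rintro (⟨hp, h⟩ | ⟨⟨hp, hr, hc⟩, hmin⟩)
    · exact ⟨hp, by omega⟩
    · refine ⟨hp, Or.inr ?_⟩
      have hq : (p.1, c) ∈ lam := lam.up_left_mem le_rfl hc hp
      have := hmin (p.1, c) ⟨hq, hr, le_rfl⟩
      omega
  · rintro ⟨hp, h⟩
    by_cases h' : p.1 < r ∨ p.2 < c
    · exact Or.inl ⟨hp, h'⟩
    · push_neg at h'
      refine Or.inr ⟨⟨hp, h'.1, h'.2⟩, fun q hq => ?_⟩
      obtain ⟨_, _, hq2⟩ := hq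
      omega

lemma fill_eq (lam : YoungDiagram) (eps : ℕ → Bool) (k : ℕ) :
    fill lam.cells eps k =
      lam.cells.filter (fun p =>
        p.1 < ((Finset.range k).filter fun m => eps m = false).card ∨
        p.2 < ((Finset.range k).filter fun m => eps m = true).card) := by
  induction k with
  | zero => simp [fill]
  | succ k ih =>
    have hk : k ∉ Finset.range k := by simp
    rw [fill, ih]
    cases he : eps k with
    | false =>
      have e0 : ((Finset.range (k+1)).filter fun m => eps m = false).card
          = ((Finset.range k).filter fun m => eps m = false).card + 1 := by
        rw [Finset.range_add_one, Finset.filter_insert, if_pos he,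
          Finset.card_insert_of_notMem (fun h => hk (Finset.mem_of_mem_filter _ h))]
      have e1 : ((Finset.range (k+1)).filter fun m => eps m = true).card
          = ((Finset.range k).filter fun m => eps m = true).card := by
        rw [Finset.range_add_one, Finset.filter_insert, if_neg (by simp [he])]
      rw [e0, e1, if_neg (by simp)]
      exact step_row lam _ _
    | true =>
      have e0 : ((Finset.range (k+1)).filter fun m => eps m = false).card
          = ((Finset.range k).filter fun m => eps m = false).card := by
        rw [Finset.range_add_one, Finset.filter_insert, if_neg (by simp [he])]
      have e1 : ((Finset.range (k+1)).filter fun m => eps m = true).card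
          = ((Finset.range k).filter fun m => eps m = true).card + 1 := by
        rw [Finset.range_add_one, Finset.filter_insert, if_pos he,
          Finset.card_insert_of_notMem (fun h => hk (Finset.mem_of_mem_filter _ h))]
      rw [e0, e1, if_pos rfl]
      exact step_col lam _ _

/-- For every `(M|N)`-hook partition `λ` (i.e. every cell in row `≥ M` lies in column `< N`,
equivalently `λ_{M+1} ≤ N`) and every 01-sequence `ε` of length `M + N` with exactly `M`
zeros and `N` ones, the hook filling `H_λ` is well-defined: after `M + N` steps of the
inductive procedure every box of `λ` is filled. -/
theorem hook_filling_well_defined (M N : ℕ) (lam : YoungDiagram)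
    (hhook : ∀ c ∈ lam.cells, M ≤ c.1 → c.2 < N)
    (eps : ℕ → Bool)
    (h0 : ((Finset.range (M + N)).filter fun k => eps k = false).card = M)
    (h1 : ((Finset.range (M + N)).filter fun k => eps k = true).card = N) :
    fill lam.cells eps (M + N) = lam.cells := by
  rw [fill_eq, h0, h1]
  ext p
  simp only [Finset.mem_filter, and_iff_left_iff_imp]
  intro hp
  rcases lt_or_ge p.1 M with h | h
  · exact Or.inl h
  · exact Or.inr (hhook p hp h)
end
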